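/- Let M be a matroid of rank k+1 (k ≥ 2) and L a rank-2 flat (line) of M. The hyperplanes of the principal truncation of L in M are precisely: the hyperplanes of M containing L, together with the rank-(k−1) flats of M that are skew to L. -/

import Mathlib

/-!
If `L ⊆ cl H`, the truncation lowers the rank of `H` and of every `insert e H` by one, so `H` is a
flat of `N` exactly when it is a flat of `M`, and its `N`-rank is `r(H) - 1`. Otherwise
`r_N(H) = r(H)`, and `H` is a flat of `N` exactly when it is a flat of `M` and no single element `e`
brings `L` into `cl (insert e H)`. Adding an element of `L \ cl H` shows such an `e` exists exactly
when `r(H ∪ L) ≤ r(H) + 1`, which for a line `L` says that `H` and `L` are not skew.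
-/

open Set
open scoped Classical

namespace MatroidPaper

variable {α : Type*}

/-- The rank of a set in a matroid: the supremum of cardinalities of independent subsets. -/
noncomputable def rkS (M : Matroid α) (X : Set α) : ℕ :=
  sSup {n | ∃ I, M.Indep I ∧ I ⊆ X ∧ I.ncard = n}

/-- The rank of a matroid. -/
noncomputable def rk (M : Matroid α) : ℕ := rkS M M.E

/-- A hyperplane: a flat of rank `rk M - 1`. -/
def Hyp (M : Matroid α) (H : Set α) : Prop := M.IsFlat H ∧ rkS M H = rk M - 1

/-- Two sets are skew if the rank of their union is the sum of their ranks. -/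
def SkewSets (M : Matroid α) (X Y : Set α) : Prop :=
  rkS M (X ∪ Y) = rkS M X + rkS M Y

/-- A simple matroid: every subset of the ground set with at most two elements is independent. -/
def SimpleM (M : Matroid α) : Prop := ∀ X ⊆ M.E, X.ncard ≤ 2 → M.Indep X

/-- A real-representable matroid. -/
def RealRep (M : Matroid α) : Prop :=
  ∃ (n : ℕ) (φ : α → (Fin n → ℝ)), ∀ I, I ⊆ M.E →
    (M.Indep I ↔ LinearIndependent ℝ (fun x : I => φ x))

/-- A matroid is `k`-degenerate if it has rank at most one or its ground set is covered by
flats of rank at least two with `∑ (r(Fᵢ) - 1) ≤ k - 1`. -/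
def Degen (M : Matroid α) (k : ℕ) : Prop :=
  rk M ≤ 1 ∨ ∃ (t : ℕ) (F : Fin t → Set α),
    (∀ i, M.IsFlat (F i) ∧ 2 ≤ rkS M (F i)) ∧
    M.E ⊆ ⋃ i, F i ∧ ∑ i, (rkS M (F i) - 1) ≤ k - 1

/-- A set `X` is `k`-degenerate in `M` if the restriction `M|X` is a `k`-degenerate matroid. -/
def DegenSet (M : Matroid α) (X : Set α) (k : ℕ) : Prop := Degen (M.restrict X) k

/-- `N` is the (one-fold) principal truncation of `F` in `M`. -/
noncomputable def IsPT (M : Matroid α) (F : Set α) (N : Matroid α) : Prop :=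
  N.E = M.E ∧ ∀ X ⊆ M.E,
    rkS N X = if F ⊆ M.closure X then rkS M X - 1 else rkS M X

/-- `N` is the complete principal truncation `M ÷ F` of `F` in `M`. -/
def IsCPT (M : Matroid α) (F : Set α) (N : Matroid α) : Prop :=
  N.E = M.E ∧ ∀ X ⊆ M.E,
    rkS N X = min (rkS M X + (rkS M F - 1)) (rkS M (X ∪ F)) - (rkS M F - 1)

section Rank

open Matroid

variable {M : Matroid α} [M.RankFinite] {X Y I : Set α} {e : α}

lemma rkS_eq_ncard_of_isBasis' (hI : M.IsBasis' I X) : rkS M X = I.ncard := by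
  refine IsGreatest.csSup_eq ⟨⟨I, hI.indep, hI.subset, rfl⟩, ?_⟩
  rintro n ⟨J, hJ, hJX, rfl⟩
  have h := hJ.encard_le_eRk_of_subset hJX
  rw [hI.eRk_eq_encard, ← hJ.finite.cast_ncard_eq, ← hI.indep.finite.cast_ncard_eq] at h
  exact_mod_cast h

lemma cast_rkS (M : Matroid α) [M.RankFinite] (X : Set α) : (rkS M X : ℕ∞) = M.eRk X := by
  obtain ⟨I, hI⟩ := M.exists_isBasis' X
  rw [rkS_eq_ncard_of_isBasis' hI, hI.eRk_eq_encard, hI.indep.finite.cast_ncard_eq]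

lemma rkS_mono (h : X ⊆ Y) : rkS M X ≤ rkS M Y := by
  rw [← Nat.cast_le (α := ℕ∞), cast_rkS, cast_rkS]
  exact M.eRk_mono h

lemma rkS_closure (M : Matroid α) [M.RankFinite] (X : Set α) : rkS M (M.closure X) = rkS M X := by
  rw [← Nat.cast_inj (R := ℕ∞), cast_rkS, cast_rkS, eRk_closure_eq]

lemma rkS_union_le (X Y : Set α) : rkS M (X ∪ Y) ≤ rkS M X + rkS M Y := by
  rw [← Nat.cast_le (α := ℕ∞), Nat.cast_add, cast_rkS, cast_rkS, cast_rkS]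
  exact M.eRk_union_le_eRk_add_eRk X Y

lemma rkS_insert_le (e : α) (X : Set α) : rkS M (insert e X) ≤ rkS M X + 1 := by
  rw [← Nat.cast_le (α := ℕ∞), Nat.cast_add, cast_rkS, cast_rkS, Nat.cast_one]
  exact M.eRk_insert_le_add_one e X

lemma rkS_insert_of_notMem_closure (he : e ∈ M.E \ M.closure X) :
    rkS M (insert e X) = rkS M X + 1 := by
  rw [← Nat.cast_inj (R := ℕ∞), Nat.cast_add, cast_rkS, cast_rkS, Nat.cast_one,
    eRk_insert_eq_add_one he]

lemma rkS_union_of_subset_closure (h : Y ⊆ M.closure X) : rkS M (X ∪ Y) = rkS M X := by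
  refine le_antisymm ?_ (rkS_mono subset_union_left)
  rw [← Nat.cast_le (α := ℕ∞), cast_rkS, cast_rkS]
  calc M.eRk (X ∪ Y) ≤ M.eRk (X ∪ M.closure X) := M.eRk_mono (union_subset_union_right X h)
    _ = M.eRk X := by rw [eRk_union_closure_right_eq, union_self]

lemma mem_closure_iff_rkS_insert (he : e ∈ M.E) :
    e ∈ M.closure X ↔ rkS M (insert e X) = rkS M X := by
  refine ⟨fun h => ?_, fun h => by_contra fun hX => ?_⟩
  · rw [← rkS_closure, closure_insert_eq_of_mem_closure h, rkS_closure]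
  · rw [rkS_insert_of_notMem_closure ⟨he, hX⟩] at h
    omega

lemma isFlat_iff_rkS_insert :
    M.IsFlat X ↔ X ⊆ M.E ∧ ∀ e ∈ M.E, rkS M (insert e X) = rkS M X → e ∈ X := by
  refine ⟨fun hX => ⟨hX.subset_ground, fun e he h => ?_⟩, fun ⟨hXE, hX⟩ => ?_⟩
  · rwa [← hX.closure, mem_closure_iff_rkS_insert he]
  · refine isFlat_iff_closure_eq.2 <| (M.subset_closure X hXE).antisymm' fun e he => ?_
    have heE := M.mem_ground_of_mem_closure he
    exact hX e heE ((mem_closure_iff_rkS_insert heE).1 he)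

lemma closure_eq_closure_of_subset_of_rkS_le (hXY : X ⊆ Y) (h : rkS M Y ≤ rkS M X) :
    M.closure X = M.closure Y := by
  rw [← Nat.cast_le (α := ℕ∞), cast_rkS, cast_rkS] at h
  exact (M.isRkFinite_set X).closure_eq_closure_of_subset_of_eRk_ge_eRk hXY h

end Rank

section PrincipalTruncation

open Matroid

variable {M N : Matroid α} {L H X : Set α}

lemma IsPT.finite [M.Finite] (hN : IsPT M L N) : N.Finite :=
  ⟨hN.1 ▸ M.ground_finite⟩

lemma IsPT.rkS_of_subset_closure (hN : IsPT M L N) (hX : X ⊆ M.E) (h : L ⊆ M.closure X) :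
    rkS N X = rkS M X - 1 := by
  rw [hN.2 X hX, if_pos h]

lemma IsPT.rkS_of_not_subset_closure (hN : IsPT M L N) (hX : X ⊆ M.E) (h : ¬ L ⊆ M.closure X) :
    rkS N X = rkS M X := by
  rw [hN.2 X hX, if_neg h]

lemma IsPT.rk_eq (hN : IsPT M L N) (hL : L ⊆ M.E) : rk N = rk M - 1 := by
  rw [rk, rk, hN.1, hN.rkS_of_subset_closure subset_rfl (by rwa [closure_ground])]

lemma IsPT.isFlat_iff_of_subset_closure [M.Finite] (hN : IsPT M L N) (hL : rkS M L ≠ 0)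
    (hLH : L ⊆ M.closure H) : N.IsFlat H ↔ M.IsFlat H := by
  have := hN.finite
  have hLH' : rkS M L ≤ rkS M H := (rkS_mono hLH).trans_eq (rkS_closure M H)
  rw [isFlat_iff_rkS_insert, isFlat_iff_rkS_insert, hN.1]
  refine and_congr_right fun hHE => forall₂_congr fun e he => ?_
  have hmono := rkS_mono (M := M) (subset_insert e H)
  rw [hN.rkS_of_subset_closure hHE hLH, hN.rkS_of_subset_closure (insert_subset he hHE)
    (hLH.trans (M.closure_subset_closure (subset_insert e H))),
    show rkS M (insert e H) - 1 = rkS M H - 1 ↔ rkS M (insert e H) = rkS M H by omega]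

lemma exists_subset_closure_insert_iff [M.RankFinite] (hL : L ⊆ M.E)
    (hLH : ¬ L ⊆ M.closure H) :
    (∃ e ∈ M.E, L ⊆ M.closure (insert e H)) ↔ rkS M (H ∪ L) ≤ rkS M H + 1 := by
  constructor
  · rintro ⟨e, -, he⟩
    calc rkS M (H ∪ L) ≤ rkS M (insert e H ∪ L) := rkS_mono (union_subset_union_left L
          (subset_insert e H))
      _ = rkS M (insert e H) := rkS_union_of_subset_closure he
      _ ≤ rkS M H + 1 := rkS_insert_le e H
  · intro h
    obtain ⟨e, heL, heH⟩ := not_subset.1 hLH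
    have hsub : insert e H ⊆ H ∪ L := insert_subset (Or.inr heL) subset_union_left
    have hcl := closure_eq_closure_of_subset_of_rkS_le hsub
      (by rwa [rkS_insert_of_notMem_closure ⟨hL heL, heH⟩])
    exact ⟨e, hL heL, hcl ▸ M.subset_closure_of_subset' subset_union_right hL⟩

lemma IsPT.isFlat_iff_of_not_subset_closure [M.Finite] (hN : IsPT M L N) (hL : L ⊆ M.E)
    (hLH : ¬ L ⊆ M.closure H) : N.IsFlat H ↔ M.IsFlat H ∧ rkS M H + 1 < rkS M (H ∪ L) := by
  have := hN.finite
  rw [← not_le, ← exists_subset_closure_insert_iff hL hLH]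
  simp only [not_exists, not_and]
  have hsame : (∀ e ∈ M.E, ¬ L ⊆ M.closure (insert e H)) → (N.IsFlat H ↔ M.IsFlat H) := by
    intro hno
    rw [isFlat_iff_rkS_insert, isFlat_iff_rkS_insert, hN.1]
    refine and_congr_right fun hHE => forall₂_congr fun e he => ?_
    rw [hN.rkS_of_not_subset_closure hHE hLH,
      hN.rkS_of_not_subset_closure (insert_subset he hHE) (hno e he)]
  refine ⟨fun hF => ?_, fun ⟨hF, hno⟩ => (hsame hno).2 hF⟩
  have hno : ∀ e ∈ M.E, ¬ L ⊆ M.closure (insert e H) := by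
    intro e he hLe
    have hHE : H ⊆ M.E := hN.1 ▸ hF.subset_ground
    -- the truncation lowers the rank of `insert e H` by one, cancelling the gain from `e`
    have h1 := hN.rkS_of_subset_closure (insert_subset he hHE) hLe
    have h2 := hN.rkS_of_not_subset_closure hHE hLH
    have h3 := rkS_insert_le (M := M) e H
    have h4 := rkS_mono (M := N) (subset_insert e H)
    have heH := (isFlat_iff_rkS_insert.1 hF).2 e (hN.1 ▸ he) (by omega)
    exact hLH (by rwa [insert_eq_of_mem heH] at hLe)
  exact ⟨(hsame hno).1 hF, hno⟩

lemma skewSets_iff_lt [M.RankFinite] (hL : rkS M L = 2) :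
    SkewSets M H L ↔ rkS M H + 1 < rkS M (H ∪ L) := by
  have := rkS_union_le (M := M) H L
  rw [SkewSets]
  omega

end PrincipalTruncation

theorem stmt7_general (k : ℕ) (M N : Matroid α) [M.Finite]
    (hr : rk M = k + 1) (L : Set α) (hL : M.IsFlat L) (hL2 : rkS M L = 2)
    (hN : IsPT M L N) (H : Set α) :
    Hyp N H ↔ ((Hyp M H ∧ L ⊆ H) ∨
      (M.IsFlat H ∧ rkS M H = k - 1 ∧ SkewSets M H L)) := by
  have hLE := hL.subset_ground
  rw [Hyp, Hyp, hN.rk_eq hLE, hr, Nat.add_sub_cancel, skewSets_iff_lt hL2]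
  by_cases hHE : H ⊆ M.E
  swap
  · refine iff_of_false (fun h => hHE (hN.1 ▸ h.1.subset_ground)) ?_
    rintro (⟨⟨h, -⟩, -⟩ | ⟨h, -⟩) <;> exact hHE h.subset_ground
  by_cases hLH : L ⊆ M.closure H
  · have h2 : 2 ≤ rkS M H := hL2 ▸ (rkS_mono hLH).trans_eq (rkS_closure M H)
    rw [hN.isFlat_iff_of_subset_closure (by omega) hLH, hN.rkS_of_subset_closure hHE hLH,
      rkS_union_of_subset_closure hLH]
    constructor
    · rintro ⟨hF, h⟩
      exact .inl ⟨⟨hF, by omega⟩, hF.closure ▸ hLH⟩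
    · rintro (⟨⟨hF, h⟩, -⟩ | ⟨-, -, h⟩)
      exacts [⟨hF, by omega⟩, by omega]
  · rw [hN.isFlat_iff_of_not_subset_closure hLE hLH, hN.rkS_of_not_subset_closure hHE hLH]
    have : ¬ L ⊆ H := fun h => hLH (h.trans (M.subset_closure H hHE))
    tauto

/-- The hyperplanes of the principal truncation of a line `L` are exactly the hyperplanes of `M`
containing `L` together with the rank-`(k-1)` flats of `M` skew to `L`. -/
theorem stmt7 (k : ℕ) (hk : 2 ≤ k) (M N : Matroid α) [M.Finite] (hs : SimpleM M)
    (hr : rk M = k + 1) (L : Set α) (hL : M.IsFlat L) (hL2 : rkS M L = 2)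
    (hN : IsPT M L N) (H : Set α) :
    Hyp N H ↔ ((Hyp M H ∧ L ⊆ H) ∨
      (M.IsFlat H ∧ rkS M H = k - 1 ∧ SkewSets M H L)) :=
  stmt7_general k M N hr L hL hL2 hN H

end MatroidPaper
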